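/- For any swap Schelling game (G,b,1/2) on a bipartite graph G, there exists a swap equilibrium σ such that 2·DoI(σ) ≥ DoI(σ') for every strategy profile σ'; i.e., the Price of Stability with respect to the degree of integration is at most 2. -/

import Mathlib

open Finset

namespace SwapSchelling

variable {V : Type*} [Fintype V] [DecidableEq V]

open scoped Classical in
/-- The closed neighborhood `N[v]` of a node `v` in `G`, as a `Finset`. -/
noncomputable def closedNbhd (G : SimpleGraph V) (v : V) : Finset V :=
  univ.filter (fun u => u = v ∨ G.Adj v u)

open scoped Classical in
/-- The degree `δ(v)` of a node `v` in `G`. -/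
noncomputable def deg (G : SimpleGraph V) (v : V) : ℕ :=
  (univ.filter (fun u => G.Adj v u)).card

/-- The maximum degree `Δ(G)`. -/
noncomputable def maxDeg (G : SimpleGraph V) : ℕ := univ.sup (deg G)

/-- The minimum degree `δ(G)`. -/
noncomputable def minDeg (G : SimpleGraph V) : ℕ := sInf (Set.range (deg G))

open scoped Classical in
/-- `frac G c v` is the fraction of nodes in the closed neighborhood of `v` that have
the same color as `v` (that is, `f_i(σ)` for the agent `i` occupying node `v`). -/
noncomputable def frac (G : SimpleGraph V) (c : V → Bool) (v : V) : ℝ :=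
  (((closedNbhd G v).filter (fun u => c u = c v)).card : ℝ) / ((closedNbhd G v).card : ℝ)

/-- The coloring obtained from `c` after the agents on nodes `v` and `w` swap positions. -/
def swapColor (c : V → Bool) (v w : V) : V → Bool := c ∘ Equiv.swap v w

/-- A single-peaked utility function `p` with peak at `Λ`: `p 0 = 0`, `p` is strictly
increasing on `[0,Λ]`, `p Λ = 1`, and `p x = p (Λ(1-x)/(1-Λ))` for `x ∈ [Λ,1]`. -/
structure IsSinglePeaked (p : ℝ → ℝ) (Λ : ℝ) : Prop where
  peak_mem : Λ ∈ Set.Ioo (0 : ℝ) 1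
  map_zero : p 0 = 0
  strictMonoOn : StrictMonoOn p (Set.Icc 0 Λ)
  map_peak : p Λ = 1
  symm : ∀ x ∈ Set.Icc Λ 1, p x = p (Λ * (1 - x) / (1 - Λ))

/-- A strategy profile: a 2-coloring of the nodes with exactly `b` blue (`true`) nodes. -/
def IsProfile (c : V → Bool) (b : ℕ) : Prop :=
  (univ.filter (fun v => c v = true)).card = b

/-- The structural data of a swap Schelling game `(G, b, Λ)` with utility function `p`:
`G` is connected, there are `b` blue agents with `1 ≤ b ≤ n/2`, and `p` is a
single-peaked utility function with peak `Λ`. -/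
structure IsGame (G : SimpleGraph V) (b : ℕ) (Λ : ℝ) (p : ℝ → ℝ) : Prop where
  connected : G.Connected
  one_le_b : 1 ≤ b
  b_le_half : 2 * b ≤ Fintype.card V
  singlePeaked : IsSinglePeaked p Λ

/-- The swap of the two (differently colored) agents occupying nodes `v` and `w`
is profitable: both agents strictly increase their utility. -/
def ProfitableSwap (G : SimpleGraph V) (p : ℝ → ℝ) (c : V → Bool) (v w : V) : Prop :=
  c v ≠ c w ∧
  p (frac G (swapColor c v w) w) > p (frac G c v) ∧
  p (frac G (swapColor c v w) v) > p (frac G c w)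

/-- A swap equilibrium: no profitable swap exists. -/
def IsSwapEquilibrium (G : SimpleGraph V) (p : ℝ → ℝ) (c : V → Bool) : Prop :=
  ∀ v w, ¬ ProfitableSwap G p c v w

open scoped Classical in
/-- The degree of integration: the number of non-segregated agents. -/
noncomputable def DoI (G : SimpleGraph V) (c : V → Bool) : ℕ :=
  (univ.filter (fun v => frac G c v ≠ 1)).card

open scoped Classical in
/-- The number of monochromatic edges of `G` under the coloring `c`. -/
noncomputable def Phi (G : SimpleGraph V) (c : V → Bool) : ℕ :=
  (G.edgeFinset.filter (fun e => ∀ u ∈ e, ∀ w ∈ e, c u = c w)).card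

open scoped Classical in
/-- The number of edges of `G`. -/
noncomputable def numEdges (G : SimpleGraph V) : ℕ :=
  (univ.filter (fun e : Sym2 V => e ∈ G.edgeSet)).card

/-- A finset of nodes is an independent set of `G`. -/
def IsIndepSet (G : SimpleGraph V) (s : Finset V) : Prop :=
  ∀ u ∈ s, ∀ w ∈ s, ¬ G.Adj u w

open scoped Classical in
/-- The independence number `α(G)`. -/
noncomputable def indepNum (G : SimpleGraph V) : ℕ :=
  univ.sup (fun s : Finset V => if IsIndepSet G s then s.card else 0)

open scoped Classical in
/-- The degree of `v` inside the subgraph of `G` induced by the node set `s`. -/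
noncomputable def degOn (G : SimpleGraph V) (s : Finset V) (v : V) : ℕ :=
  (s.filter (fun u => G.Adj v u)).card

end SwapSchelling

/-!
With peak `1/2` the utility satisfies `p (1 - x) = p x`. After a swap of two adjacent agents of
different colours each agent's new fraction is `1 - f` of the other's old fraction `f`, so each
ends with the other's old utility and they cannot both gain. If one colour class is an
independent set, then in a non-adjacent swap the agent of the other colour moves into a node all
of whose neighbours share its colour and gets `p 1 = 0`. Hence every profile with an independent
colour class is a swap equilibrium.

Let `X ∪ Y` be a bipartition. If one side, say `X`, has at most `b` nodes, all red agents fit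
into `Y`; each of the `n - b ≥ n / 2` red agents then has only blue neighbours and is integrated,
while no profile integrates more than `n` agents. Otherwise put the blue agents on a `b`-subset
`B` of one side maximizing `|N(B)|`: then `DoI = b + |N(B)|`, while a profile with blue set `S`
has `DoI ≤ b + |N(S ∩ X)| + |N(S ∩ Y)| ≤ b + 2 |N(B)|`.
-/

namespace SwapSchelling

namespace IsSinglePeaked

variable {p : ℝ → ℝ} {Λ x : ℝ}

lemma nonneg (hp : IsSinglePeaked p Λ) (hx : x ∈ Set.Icc (0 : ℝ) 1) : 0 ≤ p x := by
  obtain ⟨hΛ0, hΛ1⟩ := hp.peak_mem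
  have hmono : ∀ y ∈ Set.Icc 0 Λ, 0 ≤ p y := fun y hy =>
    hp.map_zero ▸ hp.strictMonoOn.monotoneOn ⟨le_rfl, hΛ0.le⟩ hy hy.1
  rcases le_total x Λ with hxΛ | hΛx
  · exact hmono x ⟨hx.1, hxΛ⟩
  · rw [hp.symm x ⟨hΛx, hx.2⟩]
    refine hmono _ ⟨by have := hx.2; positivity, ?_⟩
    rw [div_le_iff₀ (by linarith)]
    nlinarith

lemma map_one (hp : IsSinglePeaked p Λ) : p 1 = 0 := by
  rw [hp.symm 1 ⟨hp.peak_mem.2.le, le_rfl⟩, sub_self, mul_zero, zero_div, hp.map_zero]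

lemma map_one_sub (hp : IsSinglePeaked p (1 / 2)) (hx : x ∈ Set.Icc (0 : ℝ) 1) :
    p (1 - x) = p x := by
  have hsymm : ∀ y ∈ Set.Icc (1 / 2 : ℝ) 1, p y = p (1 - y) := fun y hy => by
    rw [hp.symm y hy]; ring_nf
  rcases le_total x (1 / 2) with hx2 | hx2
  · rw [hsymm (1 - x) ⟨by linarith, by linarith [hx.1]⟩, sub_sub_cancel]
  · exact (hsymm x ⟨hx2, hx.2⟩).symm

end IsSinglePeaked

lemma Bool.eq_of_ne_of_ne {x y z : Bool} (hxy : x ≠ y) (hxz : x ≠ z) : y = z := by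
  cases x <;> cases y <;> cases z <;> simp_all

variable {V : Type*} {G : SimpleGraph V}

lemma IsIndepSet.mono {S T : Finset V} (hT : IsIndepSet G T) (hST : S ⊆ T) :
    IsIndepSet G S :=
  fun u hu w hw => hT u (hST hu) w (hST hw)

lemma swapColor_comm [DecidableEq V] (c : V → Bool) (v w : V) :
    swapColor c v w = swapColor c w v := by
  rw [swapColor, swapColor, Equiv.swap_comm]

variable [Fintype V]

lemma isIndepSet_filter_coloring {α : Type*} [DecidableEq α] (C : G.Coloring α) (i : α) :
    IsIndepSet G (univ.filter fun v => C v = i) := by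
  simp only [IsIndepSet, mem_filter, mem_univ, true_and]
  intro u hu w hw hadj
  exact C.valid hadj (hu.trans hw.symm)

lemma exists_isIndepSet_union_eq_univ [DecidableEq V] (h : G.Colorable 2) :
    ∃ X Y : Finset V, IsIndepSet G X ∧ IsIndepSet G Y ∧ X ∪ Y = univ := by
  obtain ⟨C⟩ := h
  refine ⟨_, _, isIndepSet_filter_coloring C 0, isIndepSet_filter_coloring C 1, ?_⟩
  ext v
  simp only [mem_union, mem_filter, mem_univ, true_and, iff_true]
  omega

open scoped Classical in
noncomputable def openNbhd (G : SimpleGraph V) (S : Finset V) : Finset V :=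
  univ.filter fun u => ∃ x ∈ S, G.Adj x u

lemma mem_openNbhd {S : Finset V} {u : V} : u ∈ openNbhd G S ↔ ∃ x ∈ S, G.Adj x u := by
  simp [openNbhd]

lemma openNbhd_mono {S T : Finset V} (h : S ⊆ T) : openNbhd G S ⊆ openNbhd G T := fun u hu => by
  obtain ⟨x, hx, hxu⟩ := mem_openNbhd.1 hu
  exact mem_openNbhd.2 ⟨x, h hx, hxu⟩

lemma openNbhd_union [DecidableEq V] (S T : Finset V) :
    openNbhd G (S ∪ T) = openNbhd G S ∪ openNbhd G T := by
  ext u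
  simp only [mem_union, mem_openNbhd, or_and_right, exists_or]

lemma disjoint_openNbhd {S : Finset V} (hS : IsIndepSet G S) : Disjoint S (openNbhd G S) :=
  disjoint_left.2 fun u hu hN => by
    obtain ⟨x, hx, hxu⟩ := mem_openNbhd.1 hN
    exact hS x hx u hu hxu

lemma card_openNbhd_le_of_subset {X S : Finset V} {b k : ℕ}
    (hmax : ∀ T ⊆ X, #T = b → #(openNbhd G T) ≤ k) (hSX : S ⊆ X) (hSb : #S ≤ b)
    (hbX : b ≤ #X) : #(openNbhd G S) ≤ k := by
  obtain ⟨T, hST, hTX, hTb⟩ := exists_subsuperset_card_eq hSX hSb hbX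
  exact (card_le_card (openNbhd_mono hST)).trans (hmax T hTX hTb)

variable [DecidableEq V] {c : V → Bool} {p : ℝ → ℝ} {v w : V}

lemma mem_closedNbhd {u : V} : u ∈ closedNbhd G v ↔ u = v ∨ G.Adj v u := by
  simp [closedNbhd]

lemma card_closedNbhd_pos : 0 < #(closedNbhd G v) :=
  card_pos.2 ⟨v, mem_closedNbhd.2 (.inl rfl)⟩

lemma frac_mem_Icc : frac G c v ∈ Set.Icc (0 : ℝ) 1 :=
  ⟨by unfold frac; positivity,
    div_le_one_of_le₀ (by exact_mod_cast card_filter_le _ _) (by positivity)⟩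

lemma frac_eq_one_iff : frac G c v = 1 ↔ ∀ u, G.Adj v u → c u = c v := by
  have hpos : (#(closedNbhd G v) : ℝ) ≠ 0 := by exact_mod_cast card_closedNbhd_pos.ne'
  rw [frac, div_eq_one_iff_eq hpos, Nat.cast_inj, card_filter_eq_iff]
  simp only [mem_closedNbhd]
  exact ⟨fun h u hu => h u (.inr hu), by rintro h u (rfl | hu) <;> simp_all⟩

lemma frac_ne_one_iff : frac G c v ≠ 1 ↔ ∃ u, G.Adj v u ∧ c u ≠ c v := by
  simp [frac_eq_one_iff]

lemma frac_swapColor_of_adj (hadj : G.Adj v w) (hne : c v ≠ c w) :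
    frac G (swapColor c v w) w = 1 - frac G c w := by
  -- `swap v w` matches the nodes of `N[w]` not coloured `c w` before the swap with those
  -- coloured `c v` after it: `v` changes colour and `w` takes over its role.
  have hcard : #((closedNbhd G w).filter fun u => swapColor c v w u = swapColor c v w w)
      = #((closedNbhd G w).filter fun u => c u ≠ c w) := by
    refine (card_equiv (Equiv.swap v w) fun u => ?_).symm
    have hcol : c u ≠ c w ↔ c u = c v :=
      ⟨fun h => (Bool.eq_of_ne_of_ne hne.symm h.symm).symm, fun h => h ▸ hne⟩
    simp only [mem_filter, swapColor, Function.comp_apply, Equiv.swap_apply_self,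
      Equiv.swap_apply_right, hcol, and_congr_left_iff]
    intro hu
    rcases eq_or_ne u v with rfl | huv
    · simp [mem_closedNbhd, hadj.symm]
    rcases eq_or_ne u w with rfl | huw
    · exact absurd hu.symm hne
    rw [Equiv.swap_apply_of_ne_of_ne huv huw]
  have hsum := card_filter_add_card_filter_not (s := closedNbhd G w) (fun u => c u = c w)
  have hpos : (#(closedNbhd G w) : ℝ) ≠ 0 := by exact_mod_cast card_closedNbhd_pos.ne'
  rw [frac, frac, hcard, eq_sub_iff_add_eq, ← add_div, div_eq_one_iff_eq hpos]
  exact_mod_cast (add_comm _ _).trans hsum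

lemma frac_swapColor_eq_one (hnadj : ¬G.Adj v w) (hnbr : ∀ u, G.Adj v u → c u = c w) :
    frac G (swapColor c v w) v = 1 := by
  refine frac_eq_one_iff.2 fun u hu => ?_
  have huv : u ≠ v := hu.ne'
  have huw : u ≠ w := by rintro rfl; exact hnadj hu
  simp [swapColor, Equiv.swap_apply_of_ne_of_ne huv huw, hnbr u hu]

lemma ProfitableSwap.symm (h : ProfitableSwap G p c v w) : ProfitableSwap G p c w v := by
  obtain ⟨hne, hw, hv⟩ := h
  exact ⟨hne.symm, by rwa [swapColor_comm], by rwa [swapColor_comm]⟩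

lemma not_profitableSwap_of_adj (hp : IsSinglePeaked p (1 / 2)) (hadj : G.Adj v w) :
    ¬ProfitableSwap G p c v w := by
  rintro ⟨hne, hw, hv⟩
  rw [frac_swapColor_of_adj hadj hne, hp.map_one_sub frac_mem_Icc] at hw
  rw [swapColor_comm, frac_swapColor_of_adj hadj.symm hne.symm,
    hp.map_one_sub frac_mem_Icc] at hv
  exact hw.asymm hv

theorem isSwapEquilibrium_of_isIndepSet (hp : IsSinglePeaked p (1 / 2)) {a : Bool}
    (hind : IsIndepSet G (univ.filter fun v => c v = a)) : IsSwapEquilibrium G p c := by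
  have hmem : ∀ {u}, c u = a ↔ u ∈ univ.filter fun v => c v = a := by simp
  have key : ∀ v w, c v = a → ¬ProfitableSwap G p c v w := by
    rintro v w hva ⟨hne, hw, hv⟩
    by_cases hadj : G.Adj v w
    · exact not_profitableSwap_of_adj hp hadj ⟨hne, hw, hv⟩
    have hnbr : ∀ u, G.Adj v u → c u = c w := fun u hu =>
      Bool.eq_of_ne_of_ne (fun hvu => hind v (hmem.1 hva) u (hmem.1 (hvu ▸ hva)) hu) hne
    rw [frac_swapColor_eq_one hadj hnbr, hp.map_one] at hv
    exact hv.not_ge (hp.nonneg frac_mem_Icc)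
  intro v w h
  by_cases hva : c v = a
  · exact key v w hva h
  · exact key w v (Bool.eq_of_ne_of_ne h.1 hva) h.symm

lemma DoI_le_card_add_card_openNbhd (c : V → Bool) (a : Bool) :
    DoI G c ≤ #(univ.filter fun v => c v = a) + #(openNbhd G (univ.filter fun v => c v = a)) := by
  refine (card_le_card fun v hv => ?_).trans (card_union_le _ _)
  obtain ⟨u, hvu, hne⟩ := frac_ne_one_iff.1 (mem_filter.1 hv).2
  rw [mem_union, mem_openNbhd]
  by_cases hva : c v = a
  · exact .inl (by simpa using hva)
  · exact .inr ⟨u, by simpa using Bool.eq_of_ne_of_ne hne.symm hva, hvu.symm⟩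

lemma card_add_card_openNbhd_le_DoI (hnbr : ∀ v, ∃ u, G.Adj v u) {a : Bool}
    (hind : IsIndepSet G (univ.filter fun v => c v = a)) :
    #(univ.filter fun v => c v = a) + #(openNbhd G (univ.filter fun v => c v = a)) ≤ DoI G c := by
  rw [← card_union_of_disjoint (disjoint_openNbhd hind)]
  refine card_le_card fun v hv => mem_filter.2 ⟨mem_univ v, frac_ne_one_iff.2 ?_⟩
  have hmem : ∀ {u}, c u = a ↔ u ∈ univ.filter fun v => c v = a := by simp
  rcases mem_union.1 hv with hvA | hvN
  · obtain ⟨u, hvu⟩ := hnbr v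
    refine ⟨u, hvu, fun hcu => hind v hvA u (hmem.1 ?_) hvu⟩
    rw [hcu, hmem.2 hvA]
  · obtain ⟨x, hxA, hxv⟩ := mem_openNbhd.1 hvN
    refine ⟨x, hxv.symm, fun hcx => hind x hxA v (hmem.1 ?_) hxv⟩
    rw [← hcx, hmem.2 hxA]

theorem exists_equilibrium_of_isIndepSet_of_card_le {b : ℕ} {Q : Finset V}
    (hp : IsSinglePeaked p (1 / 2)) (hnbr : ∀ v, ∃ u, G.Adj v u)
    (hb : 2 * b ≤ Fintype.card V) (hQ : IsIndepSet G Q) (hbQ : Fintype.card V ≤ b + #Q) :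
    ∃ c : V → Bool, IsProfile c b ∧ IsSwapEquilibrium G p c ∧
      ∀ c' : V → Bool, IsProfile c' b → DoI G c' ≤ 2 * DoI G c := by
  obtain ⟨R, hRQ, hR⟩ := exists_subset_card_eq (s := Q) (n := Fintype.card V - b) (by omega)
  have hred : (univ.filter fun v => decide (v ∉ R) = false) = R := by ext; simp
  have hblue : (univ.filter fun v => decide (v ∉ R) = true) = Rᶜ := by ext; simp
  have hind : IsIndepSet G (univ.filter fun v => decide (v ∉ R) = false) := by
    rw [hred]; exact hQ.mono hRQ
  refine ⟨fun v => decide (v ∉ R), ?_, isSwapEquilibrium_of_isIndepSet hp hind,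
    fun c' _ => ?_⟩
  · rw [IsProfile, hblue, card_compl, hR]
    omega
  · have hlow := card_add_card_openNbhd_le_DoI hnbr hind
    have hup : DoI G c' ≤ Fintype.card V := card_le_univ _
    rw [hred, hR] at hlow
    omega

theorem exists_equilibrium_of_le_card_parts {b : ℕ} {X Y : Finset V}
    (hp : IsSinglePeaked p (1 / 2)) (hnbr : ∀ v, ∃ u, G.Adj v u)
    (hX : IsIndepSet G X) (hY : IsIndepSet G Y) (hXY : X ∪ Y = univ)
    (hbX : b ≤ #X) (hbY : b ≤ #Y) :
    ∃ c : V → Bool, IsProfile c b ∧ IsSwapEquilibrium G p c ∧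
      ∀ c' : V → Bool, IsProfile c' b → DoI G c' ≤ 2 * DoI G c := by
  obtain ⟨B, hBmem, hBmax⟩ := (X.powersetCard b ∪ Y.powersetCard b).exists_max_image
    (fun T => #(openNbhd G T)) ((powersetCard_nonempty.2 hbX).mono subset_union_left)
  have hmaxX : ∀ T ⊆ X, #T = b → #(openNbhd G T) ≤ #(openNbhd G B) := fun T hT hTb =>
    hBmax T (mem_union_left _ (mem_powersetCard.2 ⟨hT, hTb⟩))
  have hmaxY : ∀ T ⊆ Y, #T = b → #(openNbhd G T) ≤ #(openNbhd G B) := fun T hT hTb =>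
    hBmax T (mem_union_right _ (mem_powersetCard.2 ⟨hT, hTb⟩))
  have hB : IsIndepSet G B ∧ #B = b := by
    rcases mem_union.1 hBmem with h | h <;> rw [mem_powersetCard] at h
    exacts [⟨hX.mono h.1, h.2⟩, ⟨hY.mono h.1, h.2⟩]
  have hblue : (univ.filter fun v => decide (v ∈ B) = true) = B := by ext; simp
  have hind : IsIndepSet G (univ.filter fun v => decide (v ∈ B) = true) := by
    rw [hblue]; exact hB.1
  refine ⟨fun v => decide (v ∈ B), by rw [IsProfile, hblue, hB.2],
    isSwapEquilibrium_of_isIndepSet hp hind, fun c' hc' => ?_⟩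
  have hlow := card_add_card_openNbhd_le_DoI hnbr hind
  rw [hblue, hB.2] at hlow
  set S := univ.filter fun v => c' v = true
  have hSb : #S = b := hc'
  have hup : DoI G c' ≤ #S + #(openNbhd G S) := DoI_le_card_add_card_openNbhd c' true
  have hsplit : openNbhd G S = openNbhd G (S ∩ X) ∪ openNbhd G (S ∩ Y) := by
    rw [← openNbhd_union, ← inter_union_distrib_left, hXY, inter_univ]
  have hSX := card_openNbhd_le_of_subset hmaxX inter_subset_right
    ((card_le_card inter_subset_left).trans hSb.le) hbX
  have hSY := card_openNbhd_le_of_subset hmaxY inter_subset_right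
    ((card_le_card inter_subset_left).trans hSb.le) hbY
  have hS := hsplit ▸ card_union_le (openNbhd G (S ∩ X)) (openNbhd G (S ∩ Y))
  omega

/-- On bipartite graphs with peak `Λ = 1/2`, there is a swap equilibrium
`σ` with `2·DoI(σ) ≥ DoI(σ')` for every strategy profile `σ'` (Price of Stability ≤ 2). -/
theorem price_of_stability_bipartite_upper
    {V : Type*} [Fintype V] [DecidableEq V] (G : SimpleGraph V) (b : ℕ) (p : ℝ → ℝ)
    (hgame : IsGame G b (1 / 2) p) (hbip : G.Colorable 2) :
    ∃ c : V → Bool, IsProfile c b ∧ IsSwapEquilibrium G p c ∧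
      ∀ c' : V → Bool, IsProfile c' b → DoI G c' ≤ 2 * DoI G c := by
  obtain ⟨X, Y, hX, hY, hXY⟩ := exists_isIndepSet_union_eq_univ hbip
  have hn := hgame.b_le_half
  have : Nontrivial V := Fintype.one_lt_card_iff_nontrivial.1 (by linarith [hgame.one_le_b])
  have hnbr := hgame.connected.preconnected.exists_adj_of_nontrivial
  have hcover : Fintype.card V ≤ #X + #Y := card_univ (α := V) ▸ hXY ▸ card_union_le X Y
  by_cases hbX : b ≤ #X
  · by_cases hbY : b ≤ #Y
    · exact exists_equilibrium_of_le_card_parts hgame.singlePeaked hnbr hX hY hXY hbX hbY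
    · exact exists_equilibrium_of_isIndepSet_of_card_le hgame.singlePeaked hnbr hn hX (by omega)
  · exact exists_equilibrium_of_isIndepSet_of_card_le hgame.singlePeaked hnbr hn hY (by omega)

end SwapSchelling
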